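/- For every integer k ≥ 1 and every integer n ≥ k+7 there exist triangulations S and T of size n such that every geodesic S = S_0, S_1, …, S_m = T from S to T in the associahedron graph satisfies conflicts(S_1, T) = conflicts(S_0, T) + k; that is, every geodesic from S to T begins with an edge flip that increases the number of conflicts with T by exactly k. -/

import Mathlib

/-- Two chords `e = {e.1, e.2}` and `f = {f.1, f.2}` (each written with first
coordinate smaller) of a convex polygon cross. -/
def Crosses (e f : ℕ × ℕ) : Prop :=
  (e.1 < f.1 ∧ f.1 < e.2 ∧ e.2 < f.2) ∨ (f.1 < e.1 ∧ e.1 < f.2 ∧ f.2 < e.2)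

instance (e f : ℕ × ℕ) : Decidable (Crosses e f) := by
  unfold Crosses; exact inferInstance

/-- `e` is a diagonal of the convex `(n+2)`-gon with vertices `0, 1, …, n+1`
(in order), i.e. a chord joining two non-adjacent vertices, recorded with
smaller endpoint first. -/
def IsDiagonal (n : ℕ) (e : ℕ × ℕ) : Prop :=
  e.1 < e.2 ∧ e.2 ≤ n + 1 ∧ e.1 + 1 < e.2 ∧ ¬(e.1 = 0 ∧ e.2 = n + 1)

/-- A triangulation of size `n`: a set of `n - 1` pairwise non-crossing
diagonals of the `(n+2)`-gon (dividing it into `n` triangles). -/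
def IsTriangulation (n : ℕ) (S : Finset (ℕ × ℕ)) : Prop :=
  S.card = n - 1 ∧ (∀ e ∈ S, IsDiagonal n e) ∧ ∀ e ∈ S, ∀ f ∈ S, ¬ Crosses e f

/-- The number of conflicts between `S` and `T`: the number of pairs
`(s, t)` with `s ∈ S`, `t ∈ T` such that `s` and `t` cross. -/
def conflicts (S T : Finset (ℕ × ℕ)) : ℕ :=
  ((S ×ˢ T).filter fun p => Crosses p.1 p.2).card

/-- `S` and `T` are triangulations of size `n` differing by a single edge
flip: exactly one diagonal of `S` is replaced by one other diagonal. -/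
def FlipAdj (n : ℕ) (S T : Finset (ℕ × ℕ)) : Prop :=
  IsTriangulation n S ∧ IsTriangulation n T ∧ (S \ T).card = 1 ∧ (T \ S).card = 1

/-- `f 0, f 1, …, f k` is a path `S = f 0, …, f k = T` in the associahedron
graph of size `n` (consecutive triangulations differ by an edge flip). -/
def IsFlipPath (n k : ℕ) (f : ℕ → Finset (ℕ × ℕ)) (S T : Finset (ℕ × ℕ)) : Prop :=
  f 0 = S ∧ f k = T ∧ ∀ i < k, FlipAdj n (f i) (f (i + 1))

/-- The flip distance `d(S,T)`: the least length of a path from `S` to `T`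
in the associahedron graph of size `n`. -/
noncomputable def flipDist (n : ℕ) (S T : Finset (ℕ × ℕ)) : ℕ :=
  sInf {k | ∃ f, IsFlipPath n k f S T}

/-- A geodesic from `S` to `T`: a path in the associahedron graph whose
length `k` equals the distance `d(S,T)`. -/
def IsGeodesic (n k : ℕ) (f : ℕ → Finset (ℕ × ℕ)) (S T : Finset (ℕ × ℕ)) : Prop :=
  IsFlipPath n k f S T ∧ k = flipDist n S T

/-- An edge `e ∈ S`, `e ∉ T` is one-off with respect to `T` if flipping `e`
in `S` directly produces an edge of `T \ S`. -/
def OneOff (n : ℕ) (S T : Finset (ℕ × ℕ)) (e : ℕ × ℕ) : Prop :=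
  e ∈ S ∧ e ∉ T ∧ ∃ e' ∈ T, e' ∉ S ∧ IsTriangulation n (insert e' (S.erase e))

/-!
Let `S` be the fan at vertex `0` with `(0, k+7)` replaced by `(k+6, k+8)`, and let `T` share the
diagonals `(0, j)`, `j ≥ k+8`, with `S` and otherwise consist of `(j, k+8)` for `1 ≤ j ≤ k+3` and
`(j, k+7)` for `k+3 ≤ j ≤ k+5`. Then `|S \ T| = k+6`, but every diagonal of `T \ S` crosses two
diagonals of `S`, so no flip out of `S` inserts a diagonal of `T`. Since `|U \ T|` drops by at most
one per flip, `d(S,T) ≥ k+7`, and an explicit path gives equality.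

Hence on a geodesic the first flip makes no progress and the second one inserts a diagonal of `T`
crossing a single diagonal of the current triangulation. This forces `(k+5, k+7)`, which crosses
both `(0, k+6)` and `(k+6, k+8)`, so the first flip removed one of them. Removing `(0, k+6)` leads
to `deadEnd`, from which again no flip makes progress, which is too slow for a geodesic. So the
first flip is `(k+6, k+8) ↦ (0, k+7)`: it trades the 3 conflicts of `(k+6, k+8)` with `T` for
the `k+3` conflicts of `(0, k+7)`.
-/

def CrossesTwo (U : Finset (ℕ × ℕ)) (t : ℕ × ℕ) : Prop :=
  ∃ a ∈ U, ∃ b ∈ U, a ≠ b ∧ Crosses t a ∧ Crosses t b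

def FlipReach (n m : ℕ) (U V : Finset (ℕ × ℕ)) : Prop :=
  ∃ f, IsFlipPath n m f U V

section Flips

variable {n : ℕ}

theorem Finset.card_sdiff_le_card_insert_erase_sdiff_add_one {α : Type*} [DecidableEq α]
    (U T : Finset α) (s x : α) : (U \ T).card ≤ (insert x (U.erase s) \ T).card + 1 := by
  have hsub : U \ T ⊆ insert s (insert x (U.erase s) \ T) := by
    intro a ha
    rw [Finset.mem_sdiff] at ha
    by_cases has : a = s
    · exact has ▸ Finset.mem_insert_self _ _
    · simp [has, ha.1, ha.2]
  exact (Finset.card_le_card hsub).trans (Finset.card_insert_le _ _)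

theorem Finset.card_sdiff_le_card_insert_erase_sdiff {α : Type*} [DecidableEq α]
    {U T : Finset α} {x : α} (hxU : x ∉ U) (hxT : x ∉ T) (s : α) :
    (U \ T).card ≤ (insert x (U.erase s) \ T).card := by
  have hsub : insert x ((U \ T).erase s) ⊆ insert x (U.erase s) \ T := by
    intro a ha
    simp only [Finset.mem_insert, Finset.mem_erase, Finset.mem_sdiff] at ha ⊢
    rcases ha with rfl | ⟨has, haU, haT⟩
    · exact ⟨Or.inl rfl, hxT⟩
    · exact ⟨Or.inr ⟨has, haU⟩, haT⟩
  have hx : x ∉ (U \ T).erase s := fun h => hxU (Finset.mem_sdiff.1 (Finset.mem_of_mem_erase h)).1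
  have := Finset.card_le_card hsub
  rw [Finset.card_insert_of_notMem hx] at this
  have := Finset.pred_card_le_card_erase (s := U \ T) (a := s)
  omega

theorem Finset.card_insert_erase_sdiff_of_mem {α : Type*} [DecidableEq α]
    {U T : Finset α} {s x : α} (hxU : x ∉ U) (hxT : x ∉ T) (hsT : s ∈ T) :
    (insert x (U.erase s) \ T).card = (U \ T).card + 1 := by
  have : insert x (U.erase s) \ T = insert x (U \ T) := by
    ext a
    simp only [Finset.mem_sdiff, Finset.mem_insert, Finset.mem_erase]
    grind
  rw [this, Finset.card_insert_of_notMem fun h => hxU (Finset.mem_sdiff.1 h).1]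

theorem FlipAdj.exists_eq_insert_erase {U V : Finset (ℕ × ℕ)} (h : FlipAdj n U V) :
    ∃ s ∈ U, ∃ x ∉ U, V = insert x (U.erase s) := by
  obtain ⟨s, hs⟩ := Finset.card_eq_one.1 h.2.2.1
  obtain ⟨x, hx⟩ := Finset.card_eq_one.1 h.2.2.2
  have hs' := Finset.ext_iff.1 hs
  have hx' := Finset.ext_iff.1 hx
  simp only [Finset.mem_sdiff, Finset.mem_singleton] at hs' hx'
  refine ⟨s, ((hs' s).2 rfl).1, x, ((hx' x).2 rfl).2, ?_⟩
  ext a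
  have := hs' a
  have := hx' a
  simp only [Finset.mem_insert, Finset.mem_erase]
  grind

theorem eq_of_crosses_of_isTriangulation_insert_erase {U : Finset (ℕ × ℕ)} {s x e : ℕ × ℕ}
    (hV : IsTriangulation n (insert x (U.erase s))) (he : e ∈ U) (hc : Crosses x e) : e = s := by
  by_contra hne
  exact hV.2.2 x (Finset.mem_insert_self _ _) e
    (Finset.mem_insert_of_mem (Finset.mem_erase.2 ⟨hne, he⟩)) hc

theorem not_crossesTwo_of_isTriangulation_insert_erase {U : Finset (ℕ × ℕ)} {s x : ℕ × ℕ}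
    (hV : IsTriangulation n (insert x (U.erase s))) : ¬ CrossesTwo U x := by
  rintro ⟨a, ha, b, hb, hab, hxa, hxb⟩
  exact hab ((eq_of_crosses_of_isTriangulation_insert_erase hV ha hxa).trans
    (eq_of_crosses_of_isTriangulation_insert_erase hV hb hxb).symm)

theorem FlipAdj.card_sdiff_le_of_crossesTwo {U V T : Finset (ℕ × ℕ)} (h : FlipAdj n U V)
    (hT : ∀ t ∈ T, t ∉ U → CrossesTwo U t) : (U \ T).card ≤ (V \ T).card := by
  obtain ⟨s, -, x, hxU, rfl⟩ := h.exists_eq_insert_erase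
  have hxT : x ∉ T := fun hxT => not_crossesTwo_of_isTriangulation_insert_erase h.2.1 (hT x hxT hxU)
  exact Finset.card_sdiff_le_card_insert_erase_sdiff hxU hxT s

namespace IsFlipPath

variable {m : ℕ} {f : ℕ → Finset (ℕ × ℕ)} {U T : Finset (ℕ × ℕ)}

theorem flipAdj (h : IsFlipPath n m f U T) {i : ℕ} (hi : i < m) : FlipAdj n (f i) (f (i + 1)) :=
  h.2.2 i hi

theorem drop (h : IsFlipPath n m f U T) {i : ℕ} (hi : i ≤ m) :
    IsFlipPath n (m - i) (fun j => f (i + j)) (f i) T :=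
  ⟨rfl, by simpa [Nat.add_sub_cancel' hi] using h.2.1, fun j hj => h.2.2 (i + j) (by omega)⟩

theorem card_sdiff_le (h : IsFlipPath n m f U T) : (U \ T).card ≤ m := by
  induction m generalizing f U with
  | zero => simp [← h.1, h.2.1]
  | succ m ih =>
    have h0 : FlipAdj n U (f 1) := h.1 ▸ h.flipAdj (Nat.succ_pos m)
    obtain ⟨s, -, x, -, h1⟩ := h0.exists_eq_insert_erase
    have := ih (by simpa [add_comm] using h.drop (i := 1) (by omega))
    have := Finset.card_sdiff_le_card_insert_erase_sdiff_add_one U T s x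
    rw [← h1] at this
    omega

theorem card_sdiff_apply_le (h : IsFlipPath n m f U T) {i : ℕ} (hi : i ≤ m) :
    (f i \ T).card ≤ m - i :=
  (h.drop hi).card_sdiff_le

theorem card_sdiff_lt (h : IsFlipPath n m f U T) (hU : (U \ T).Nonempty)
    (hT : ∀ t ∈ T, t ∉ U → CrossesTwo U t) : (U \ T).card < m := by
  have hm : 0 < m := hU.card_pos.trans_le h.card_sdiff_le
  have h0 : FlipAdj n U (f 1) := h.1 ▸ h.flipAdj hm
  have := h0.card_sdiff_le_of_crossesTwo hT
  have : (f 1 \ T).card ≤ m - 1 := h.card_sdiff_apply_le hm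
  omega

end IsFlipPath

namespace FlipReach

theorem refl (U : Finset (ℕ × ℕ)) : FlipReach n 0 U U :=
  ⟨fun _ => U, rfl, rfl, fun _ hi => absurd hi (Nat.not_lt_zero _)⟩

theorem of_flipAdj {U V : Finset (ℕ × ℕ)} (h : FlipAdj n U V) : FlipReach n 1 U V :=
  ⟨fun i => if i = 0 then U else V, rfl, rfl, fun i hi => by simpa [Nat.lt_one_iff.1 hi] using h⟩

theorem trans {a b : ℕ} {U V W : Finset (ℕ × ℕ)} (h₁ : FlipReach n a U V) (h₂ : FlipReach n b V W) :
    FlipReach n (a + b) U W := by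
  obtain ⟨f, hf0, hfa, hf⟩ := h₁
  obtain ⟨g, hg0, hgb, hg⟩ := h₂
  refine ⟨fun i => if i ≤ a then f i else g (i - a), by simp [hf0], ?_, fun i hi => ?_⟩
  · rcases Nat.eq_zero_or_pos b with rfl | hb
    · simp [hfa, ← hg0, hgb]
    · simp [show ¬ a + b ≤ a by omega, hgb]
  · rcases Nat.lt_or_ge i a with hia | hia
    · simpa [hia.le, Nat.succ_le_of_lt hia] using hf i hia
    · have := hg (i - a) (by omega)
      rcases hia.eq_or_lt with rfl | hia
      · simpa [hfa, ← hg0] using this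
      · simpa [show ¬ i ≤ a by omega, show ¬ i + 1 ≤ a by omega, Nat.sub_add_comm hia.le] using this

theorem of_chain (F : ℕ → Finset (ℕ × ℕ)) :
    ∀ d, (∀ j < d, FlipAdj n (F (j + 1)) (F j)) → FlipReach n d (F d) (F 0)
  | 0, _ => refl _
  | d + 1, h => by
    simpa [add_comm] using (of_flipAdj (h d (Nat.lt_succ_self d))).trans
      (of_chain F d fun j hj => h j (by omega))

theorem flipDist_le {m : ℕ} {U V : Finset (ℕ × ℕ)} (h : FlipReach n m U V) : flipDist n U V ≤ m :=
  Nat.sInf_le h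

end FlipReach

theorem conflicts_eq_sum (U T : Finset (ℕ × ℕ)) :
    conflicts U T = ∑ e ∈ U, (T.filter fun t => Crosses e t).card := by
  simp only [conflicts, Finset.card_filter, Finset.sum_product]

theorem conflicts_insert_erase {U T : Finset (ℕ × ℕ)} {s x : ℕ × ℕ} (hs : s ∈ U) (hx : x ∉ U) :
    conflicts (insert x (U.erase s)) T + (T.filter fun t => Crosses s t).card
      = conflicts U T + (T.filter fun t => Crosses x t).card := by
  rw [conflicts_eq_sum, conflicts_eq_sum,
    Finset.sum_insert (fun h => hx (Finset.mem_of_mem_erase h)), ← Finset.add_sum_erase _ _ hs]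
  ring

end Flips

namespace ConflictIncreasingFlip

def zeroFan (a b : ℕ) : Finset (ℕ × ℕ) := (Finset.Icc a b).image fun j => (0, j)

def fanTo (c a b : ℕ) : Finset (ℕ × ℕ) := (Finset.Icc a b).image fun j => (j, c)

@[simp] theorem mem_zeroFan {a b p q : ℕ} : (p, q) ∈ zeroFan a b ↔ p = 0 ∧ a ≤ q ∧ q ≤ b := by
  simp [zeroFan, Prod.ext_iff, eq_comm, and_comm]

@[simp] theorem mem_fanTo {c a b p q : ℕ} : (p, q) ∈ fanTo c a b ↔ a ≤ p ∧ p ≤ b ∧ q = c := by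
  simp only [fanTo, Finset.mem_image, Finset.mem_Icc, Prod.mk.injEq]
  constructor
  · rintro ⟨j, hj, rfl, rfl⟩; exact ⟨hj.1, hj.2, rfl⟩
  · rintro ⟨h₁, h₂, rfl⟩; exact ⟨p, ⟨h₁, h₂⟩, rfl, rfl⟩

theorem card_zeroFan (a b : ℕ) : (zeroFan a b).card = b + 1 - a := by
  rw [zeroFan, Finset.card_image_of_injective _ fun x y h => by simpa using h, Nat.card_Icc]

theorem card_fanTo (c a b : ℕ) : (fanTo c a b).card = b + 1 - a := by
  rw [fanTo, Finset.card_image_of_injective _ fun x y h => by simpa using h, Nat.card_Icc]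

variable {k n : ℕ}

def startTri (k n : ℕ) : Finset (ℕ × ℕ) := zeroFan 2 (k + 6) ∪ {(k + 6, k + 8)} ∪ zeroFan (k + 8) n

def targetTri (k n : ℕ) : Finset (ℕ × ℕ) :=
  fanTo (k + 8) 1 (k + 3) ∪ fanTo (k + 7) (k + 3) (k + 5) ∪ zeroFan (k + 8) n

def firstLeg (k n j : ℕ) : Finset (ℕ × ℕ) :=
  zeroFan 2 j ∪ fanTo (k + 7) j (k + 5) ∪ {(0, k + 7)} ∪ zeroFan (k + 8) n

def secondLeg (k n j : ℕ) : Finset (ℕ × ℕ) :=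
  zeroFan 2 j ∪ fanTo (k + 7) (k + 3) (k + 5) ∪ fanTo (k + 8) j (k + 3) ∪ zeroFan (k + 8) n

def deadEnd (k n : ℕ) : Finset (ℕ × ℕ) :=
  zeroFan 2 (k + 5) ∪ {(k + 5, k + 7), (k + 5, k + 8)} ∪ zeroFan (k + 8) n

theorem mem_startTri {p q : ℕ} : (p, q) ∈ startTri k n ↔
    (p = 0 ∧ 2 ≤ q ∧ q ≤ k + 6) ∨ (p = k + 6 ∧ q = k + 8) ∨ (p = 0 ∧ k + 8 ≤ q ∧ q ≤ n) := by
  simp [startTri]; omega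

theorem mem_targetTri {p q : ℕ} : (p, q) ∈ targetTri k n ↔
    (1 ≤ p ∧ p ≤ k + 3 ∧ q = k + 8) ∨ (k + 3 ≤ p ∧ p ≤ k + 5 ∧ q = k + 7) ∨
      (p = 0 ∧ k + 8 ≤ q ∧ q ≤ n) := by
  simp [targetTri]

theorem mem_firstLeg {j p q : ℕ} : (p, q) ∈ firstLeg k n j ↔
    (p = 0 ∧ 2 ≤ q ∧ q ≤ j) ∨ (j ≤ p ∧ p ≤ k + 5 ∧ q = k + 7) ∨ (p = 0 ∧ q = k + 7) ∨
      (p = 0 ∧ k + 8 ≤ q ∧ q ≤ n) := by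
  simp [firstLeg]; omega

theorem mem_secondLeg {j p q : ℕ} : (p, q) ∈ secondLeg k n j ↔
    (p = 0 ∧ 2 ≤ q ∧ q ≤ j) ∨ (k + 3 ≤ p ∧ p ≤ k + 5 ∧ q = k + 7) ∨
      (j ≤ p ∧ p ≤ k + 3 ∧ q = k + 8) ∨ (p = 0 ∧ k + 8 ≤ q ∧ q ≤ n) := by
  simp [secondLeg]

theorem mem_deadEnd {p q : ℕ} : (p, q) ∈ deadEnd k n ↔
    (p = 0 ∧ 2 ≤ q ∧ q ≤ k + 5) ∨ (p = k + 5 ∧ (q = k + 7 ∨ q = k + 8)) ∨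
      (p = 0 ∧ k + 8 ≤ q ∧ q ≤ n) := by
  simp [deadEnd]; omega

theorem secondLeg_one : secondLeg k n 1 = targetTri k n := by
  ext ⟨p, q⟩; rw [mem_secondLeg, mem_targetTri]; omega

theorem card_filter_targetTri_crosses_zero_k7 :
    ((targetTri k n).filter fun t => Crosses (0, k + 7) t).card = k + 3 := by
  have : (targetTri k n).filter (fun t => Crosses (0, k + 7) t) = fanTo (k + 8) 1 (k + 3) := by
    ext ⟨p, q⟩
    rw [Finset.mem_filter, mem_targetTri, mem_fanTo]; simp only [Crosses]
    omega
  rw [this, card_fanTo]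
  omega

theorem card_filter_targetTri_crosses_short :
    ((targetTri k n).filter fun t => Crosses (k + 6, k + 8) t).card = 3 := by
  have : (targetTri k n).filter (fun t => Crosses (k + 6, k + 8) t) =
      fanTo (k + 7) (k + 3) (k + 5) := by
    ext ⟨p, q⟩
    rw [Finset.mem_filter, mem_targetTri, mem_fanTo]; simp only [Crosses]
    omega
  rw [this, card_fanTo]
  omega

section

variable (hn : k + 7 ≤ n)
include hn

theorem isTriangulation_startTri : IsTriangulation n (startTri k n) := by
  refine ⟨?_, fun ⟨p, q⟩ h => ?_, fun ⟨p, q⟩ h ⟨p', q'⟩ h' => ?_⟩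
  · rw [startTri, Finset.card_union_of_disjoint, Finset.card_union_of_disjoint, card_zeroFan,
      card_zeroFan, Finset.card_singleton]
    · omega
    all_goals
      rw [Finset.disjoint_left]
      rintro ⟨p, q⟩ h h'
      simp only [Finset.mem_union, Finset.mem_singleton, mem_zeroFan,
        Prod.mk.injEq] at h h'
      omega
  · rw [mem_startTri] at h; simp only [IsDiagonal]; omega
  · rw [mem_startTri] at h h'; simp only [Crosses]; omega

theorem isTriangulation_targetTri : IsTriangulation n (targetTri k n) := by
  refine ⟨?_, fun ⟨p, q⟩ h => ?_, fun ⟨p, q⟩ h ⟨p', q'⟩ h' => ?_⟩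
  · rw [targetTri, Finset.card_union_of_disjoint, Finset.card_union_of_disjoint, card_zeroFan,
      card_fanTo, card_fanTo]
    · omega
    all_goals
      rw [Finset.disjoint_left]
      rintro ⟨p, q⟩ h h'
      simp only [Finset.mem_union, mem_zeroFan, mem_fanTo] at h h'
      omega
  · rw [mem_targetTri] at h; simp only [IsDiagonal]; omega
  · rw [mem_targetTri] at h h'; simp only [Crosses]; omega

theorem isTriangulation_firstLeg {j : ℕ} (hj₁ : k + 3 ≤ j) (hj₂ : j ≤ k + 6) :
    IsTriangulation n (firstLeg k n j) := by
  refine ⟨?_, fun ⟨p, q⟩ h => ?_, fun ⟨p, q⟩ h ⟨p', q'⟩ h' => ?_⟩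
  · rw [firstLeg, Finset.card_union_of_disjoint, Finset.card_union_of_disjoint,
      Finset.card_union_of_disjoint, card_zeroFan, card_zeroFan, card_fanTo, Finset.card_singleton]
    · omega
    all_goals
      rw [Finset.disjoint_left]
      rintro ⟨p, q⟩ h h'
      simp only [Finset.mem_union, Finset.mem_singleton, mem_zeroFan, mem_fanTo,
        Prod.mk.injEq] at h h'
      omega
  · rw [mem_firstLeg] at h; simp only [IsDiagonal]; omega
  · rw [mem_firstLeg] at h h'; simp only [Crosses]; omega

theorem isTriangulation_secondLeg {j : ℕ} (hj₁ : 1 ≤ j) (hj₂ : j ≤ k + 3) :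
    IsTriangulation n (secondLeg k n j) := by
  refine ⟨?_, fun ⟨p, q⟩ h => ?_, fun ⟨p, q⟩ h ⟨p', q'⟩ h' => ?_⟩
  · rw [secondLeg, Finset.card_union_of_disjoint, Finset.card_union_of_disjoint,
      Finset.card_union_of_disjoint, card_zeroFan, card_zeroFan, card_fanTo, card_fanTo]
    · omega
    all_goals
      rw [Finset.disjoint_left]
      rintro ⟨p, q⟩ h h'
      simp only [Finset.mem_union, mem_zeroFan, mem_fanTo] at h h'
      omega
  · rw [mem_secondLeg] at h; simp only [IsDiagonal]; omega
  · rw [mem_secondLeg] at h h'; simp only [Crosses]; omega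

theorem flipAdj_startTri_firstLeg : FlipAdj n (startTri k n) (firstLeg k n (k + 6)) := by
  refine ⟨isTriangulation_startTri hn, isTriangulation_firstLeg hn (by omega) le_rfl,
    Finset.card_eq_one.2 ⟨(k + 6, k + 8), ?_⟩, Finset.card_eq_one.2 ⟨(0, k + 7), ?_⟩⟩ <;>
  · ext ⟨p, q⟩; simp only [Finset.mem_sdiff, mem_startTri, mem_firstLeg, Finset.mem_singleton,
      Prod.mk.injEq]; omega

theorem flipAdj_firstLeg_succ {j : ℕ} (hj₁ : k + 3 ≤ j) (hj₂ : j ≤ k + 5) :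
    FlipAdj n (firstLeg k n (j + 1)) (firstLeg k n j) := by
  refine ⟨isTriangulation_firstLeg hn (by omega) (by omega),
    isTriangulation_firstLeg hn (by omega) (by omega),
    Finset.card_eq_one.2 ⟨(0, j + 1), ?_⟩, Finset.card_eq_one.2 ⟨(j, k + 7), ?_⟩⟩ <;>
  · ext ⟨p, q⟩; simp only [Finset.mem_sdiff, mem_firstLeg, Finset.mem_singleton,
      Prod.mk.injEq]; omega

theorem flipAdj_firstLeg_secondLeg : FlipAdj n (firstLeg k n (k + 3)) (secondLeg k n (k + 3)) := by
  refine ⟨isTriangulation_firstLeg hn le_rfl (by omega),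
    isTriangulation_secondLeg hn (by omega) le_rfl,
    Finset.card_eq_one.2 ⟨(0, k + 7), ?_⟩, Finset.card_eq_one.2 ⟨(k + 3, k + 8), ?_⟩⟩ <;>
  · ext ⟨p, q⟩; simp only [Finset.mem_sdiff, mem_firstLeg, mem_secondLeg, Finset.mem_singleton,
      Prod.mk.injEq]; omega

theorem flipAdj_secondLeg_succ {j : ℕ} (hj₁ : 1 ≤ j) (hj₂ : j ≤ k + 2) :
    FlipAdj n (secondLeg k n (j + 1)) (secondLeg k n j) := by
  refine ⟨isTriangulation_secondLeg hn (by omega) (by omega),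
    isTriangulation_secondLeg hn (by omega) (by omega),
    Finset.card_eq_one.2 ⟨(0, j + 1), ?_⟩, Finset.card_eq_one.2 ⟨(j, k + 8), ?_⟩⟩ <;>
  · ext ⟨p, q⟩; simp only [Finset.mem_sdiff, mem_secondLeg, Finset.mem_singleton,
      Prod.mk.injEq]; omega

theorem flipReach_startTri_targetTri : FlipReach n (k + 7) (startTri k n) (targetTri k n) := by
  have hfirst : FlipReach n 3 (firstLeg k n (k + 6)) (firstLeg k n (k + 3)) := by
    simpa [add_assoc] using FlipReach.of_chain (fun j => firstLeg k n (k + 3 + j)) 3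
      fun j hj => by
        simpa [add_assoc] using flipAdj_firstLeg_succ hn (j := k + 3 + j) (by omega) (by omega)
  have hsecond : FlipReach n (k + 2) (secondLeg k n (k + 3)) (targetTri k n) := by
    rw [← secondLeg_one]
    exact FlipReach.of_chain (fun j => secondLeg k n (j + 1)) (k + 2)
      fun j hj => flipAdj_secondLeg_succ hn (j := j + 1) (by omega) (by omega)
  have := (FlipReach.of_flipAdj (flipAdj_startTri_firstLeg hn)).trans
    (hfirst.trans ((FlipReach.of_flipAdj (flipAdj_firstLeg_secondLeg hn)).trans hsecond))
  rwa [show 1 + (3 + (1 + (k + 2))) = k + 7 by omega] at this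

theorem card_startTri_sdiff_targetTri : (startTri k n \ targetTri k n).card = k + 6 := by
  have : startTri k n \ targetTri k n = zeroFan 2 (k + 6) ∪ {(k + 6, k + 8)} := by
    ext ⟨p, q⟩; simp only [Finset.mem_sdiff, mem_startTri, mem_targetTri, Finset.mem_union,
      mem_zeroFan, Finset.mem_singleton, Prod.mk.injEq]; omega
  rw [this, Finset.card_union_of_disjoint, card_zeroFan, Finset.card_singleton]
  · omega
  · rw [Finset.disjoint_left]
    rintro ⟨p, q⟩ h h'
    simp only [mem_zeroFan, Finset.mem_singleton, Prod.mk.injEq] at h h'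
    omega

theorem card_deadEnd_sdiff_targetTri : (deadEnd k n \ targetTri k n).card = k + 5 := by
  have : deadEnd k n \ targetTri k n = zeroFan 2 (k + 5) ∪ {(k + 5, k + 8)} := by
    ext ⟨p, q⟩; simp only [Finset.mem_sdiff, mem_deadEnd, mem_targetTri, Finset.mem_union,
      mem_zeroFan, Finset.mem_singleton, Prod.mk.injEq]; omega
  rw [this, Finset.card_union_of_disjoint, card_zeroFan, Finset.card_singleton]
  · omega
  · rw [Finset.disjoint_left]
    rintro ⟨p, q⟩ h h'
    simp only [mem_zeroFan, Finset.mem_singleton, Prod.mk.injEq] at h h'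
    omega

theorem crossesTwo_startTri :
    ∀ t ∈ targetTri k n, t ∉ startTri k n → CrossesTwo (startTri k n) t := by
  rintro ⟨p, q⟩ hT hS
  rw [mem_targetTri] at hT
  rw [mem_startTri] at hS
  rcases hT with ⟨hp₁, hp₂, rfl⟩ | ⟨hp₁, hp₂, rfl⟩ | hfan
  · exact ⟨(0, p + 1), by rw [mem_startTri]; omega, (0, p + 2), by rw [mem_startTri]; omega,
      by simp, by simp only [Crosses]; omega, by simp only [Crosses]; omega⟩
  · exact ⟨(0, p + 1), by rw [mem_startTri]; omega, (k + 6, k + 8), by rw [mem_startTri]; omega,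
      by simp, by simp only [Crosses]; omega, by simp only [Crosses]; omega⟩
  · omega

theorem crossesTwo_deadEnd : ∀ t ∈ targetTri k n, t ∉ deadEnd k n → CrossesTwo (deadEnd k n) t := by
  rintro ⟨p, q⟩ hT hD
  rw [mem_targetTri] at hT
  rw [mem_deadEnd] at hD
  rcases hT with ⟨hp₁, hp₂, rfl⟩ | ⟨hp₁, hp₂, rfl⟩ | hfan
  · exact ⟨(0, p + 1), by rw [mem_deadEnd]; omega, (0, p + 2), by rw [mem_deadEnd]; omega,
      by simp, by simp only [Crosses]; omega, by simp only [Crosses]; omega⟩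
  · exact ⟨(0, p + 1), by rw [mem_deadEnd]; omega, (k + 5, k + 8), by rw [mem_deadEnd]; omega,
      by simp, by simp only [Crosses]; omega, by simp only [Crosses]; omega⟩
  · omega

theorem flipDist_startTri_targetTri : flipDist n (startTri k n) (targetTri k n) = k + 7 := by
  refine le_antisymm (flipReach_startTri_targetTri hn).flipDist_le
    (le_csInf ⟨_, flipReach_startTri_targetTri hn⟩ fun m ⟨f, hf⟩ => ?_)
  have := hf.card_sdiff_lt (Finset.card_pos.1 (by rw [card_startTri_sdiff_targetTri hn]; omega))
    (crossesTwo_startTri hn)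
  rw [card_startTri_sdiff_targetTri hn] at this
  exact this

theorem eq_of_forall_crosses_startTri_mem_pair {t a b : ℕ × ℕ} (hT : t ∈ targetTri k n)
    (hS : t ∉ startTri k n)
    (h : ∀ e ∈ startTri k n, Crosses t e → e = a ∨ e = b) : t = (k + 5, k + 7) := by
  obtain ⟨p, q⟩ := t
  rw [mem_targetTri] at hT
  rw [mem_startTri] at hS
  rcases hT with ⟨hp₁, hp₂, rfl⟩ | ⟨hp₁, hp₂, rfl⟩ | hfan
  · have c1 := h (0, p + 1) (by rw [mem_startTri]; omega) (by simp only [Crosses]; omega)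
    have c2 := h (0, p + 2) (by rw [mem_startTri]; omega) (by simp only [Crosses]; omega)
    have c3 := h (0, p + 3) (by rw [mem_startTri]; omega) (by simp only [Crosses]; omega)
    obtain ⟨a1, a2⟩ := a; obtain ⟨b1, b2⟩ := b
    simp only [Prod.mk.injEq] at c1 c2 c3
    omega
  · obtain rfl | hp := (show p = k + 5 ∨ p < k + 5 by omega)
    · rfl
    have c1 := h (0, p + 1) (by rw [mem_startTri]; omega) (by simp only [Crosses]; omega)
    have c2 := h (0, p + 2) (by rw [mem_startTri]; omega) (by simp only [Crosses]; omega)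
    have c3 := h (k + 6, k + 8) (by rw [mem_startTri]; omega) (by simp only [Crosses]; omega)
    obtain ⟨a1, a2⟩ := a; obtain ⟨b1, b2⟩ := b
    simp only [Prod.mk.injEq] at c1 c2 c3
    omega
  · omega

theorem eq_of_forall_crosses_startTri_eq_short {x : ℕ × ℕ} (hx : IsDiagonal n x)
    (hxS : x ∉ startTri k n) (h : ∀ e ∈ startTri k n, Crosses x e → e = (k + 6, k + 8)) :
    x = (0, k + 7) := by
  obtain ⟨p, q⟩ := x
  simp only [IsDiagonal] at hx
  rw [mem_startTri] at hxS
  by_cases hp : p = 0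
  · simp only [Prod.mk.injEq]; omega
  by_cases hk : p = k + 6
  · have := h (0, k + 8) (by rw [mem_startTri]; omega) (by simp only [Crosses]; omega)
    simp only [Prod.mk.injEq] at this; omega
  · have := h (0, p + 1) (by rw [mem_startTri]; omega) (by simp only [Crosses]; omega)
    simp only [Prod.mk.injEq] at this; omega

theorem eq_of_forall_crosses_startTri_eq_fan {x : ℕ × ℕ} (hx : IsDiagonal n x)
    (hxS : x ∉ startTri k n) (h : ∀ e ∈ startTri k n, Crosses x e → e = (0, k + 6)) :
    x = (k + 5, k + 8) := by
  obtain ⟨p, q⟩ := x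
  simp only [IsDiagonal] at hx
  rw [mem_startTri] at hxS
  by_cases hp : p = 0
  · have := h (k + 6, k + 8) (by rw [mem_startTri]; omega) (by simp only [Crosses]; omega)
    simp only [Prod.mk.injEq] at this; omega
  by_cases hq : (p = k + 5 ∨ p = k + 6) ∧ q ≠ k + 8
  · by_cases hq' : q = k + 7
    · have := h (k + 6, k + 8) (by rw [mem_startTri]; omega) (by simp only [Crosses]; omega)
      simp only [Prod.mk.injEq] at this; omega
    · have := h (0, k + 8) (by rw [mem_startTri]; omega) (by simp only [Crosses]; omega)
      simp only [Prod.mk.injEq] at this; omega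
  by_cases hk : p = k + 5 ∨ p = k + 6
  · simp only [Prod.mk.injEq]; omega
  · have := h (0, p + 1) (by rw [mem_startTri]; omega) (by simp only [Crosses]; omega)
    simp only [Prod.mk.injEq] at this; omega

theorem geodesic_flip_zero {f : ℕ → Finset (ℕ × ℕ)}
    (hf : IsFlipPath n (k + 7) f (startTri k n) (targetTri k n)) :
    ∃ s ∈ startTri k n, ∃ x ∉ startTri k n, f 1 = insert x ((startTri k n).erase s) ∧
      s ∉ targetTri k n ∧ x ∉ targetTri k n := by
  have h₀ : FlipAdj n (startTri k n) (f 1) := hf.1 ▸ hf.flipAdj (by omega)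
  obtain ⟨s, hsS, x, hxS, hf1⟩ := h₀.exists_eq_insert_erase
  have hxT : x ∉ targetTri k n := fun hxT => not_crossesTwo_of_isTriangulation_insert_erase
    (hf1 ▸ h₀.2.1) (crossesTwo_startTri hn x hxT hxS)
  refine ⟨s, hsS, x, hxS, hf1, fun hsT => ?_, hxT⟩
  have hgrow := Finset.card_insert_erase_sdiff_of_mem hxS hxT hsT
  rw [← hf1, card_startTri_sdiff_targetTri hn] at hgrow
  have : (f 1 \ targetTri k n).card ≤ k + 6 := hf.card_sdiff_apply_le (i := 1) (by omega)
  omega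

theorem geodesic_flip_one {f : ℕ → Finset (ℕ × ℕ)}
    (hf : IsFlipPath n (k + 7) f (startTri k n) (targetTri k n)) :
    ∃ s ∈ startTri k n, ∃ x ∉ startTri k n, ∃ r,
      f 1 = insert x ((startTri k n).erase s) ∧ f 2 = insert (k + 5, k + 7) ((f 1).erase r) ∧
      (s = (k + 6, k + 8) ∨ s = (0, k + 6) ∧ r = (k + 6, k + 8)) := by
  obtain ⟨s, hsS, x, hxS, hf1, hsT, hxT⟩ := geodesic_flip_zero hn hf
  have h₁ : FlipAdj n (f 1) (f 2) := hf.flipAdj (by omega)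
  obtain ⟨r, -, y, hy, hf2⟩ := h₁.exists_eq_insert_erase
  -- the first flip made no progress, so the second one must
  have hyT : y ∈ targetTri k n := by
    by_contra hyT
    have h01 := Finset.card_sdiff_le_card_insert_erase_sdiff hxS hxT s
    have h12 := Finset.card_sdiff_le_card_insert_erase_sdiff hy hyT r
    rw [← hf1, card_startTri_sdiff_targetTri hn] at h01
    rw [← hf2] at h12
    have : (f 2 \ targetTri k n).card ≤ k + 5 := hf.card_sdiff_apply_le (i := 2) (by omega)
    omega
  have hyS : y ∉ startTri k n := fun hyS =>
    hy (hf1 ▸ Finset.mem_insert_of_mem (Finset.mem_erase.2 ⟨fun h => hsT (h ▸ hyT), hyS⟩))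
  have hy_only : ∀ e ∈ startTri k n, Crosses y e → e = s ∨ e = r := by
    intro e he hc
    by_cases hes : e = s
    · exact Or.inl hes
    · exact Or.inr (eq_of_crosses_of_isTriangulation_insert_erase (hf2 ▸ h₁.2.1)
        (hf1 ▸ Finset.mem_insert_of_mem (Finset.mem_erase.2 ⟨hes, he⟩)) hc)
  obtain rfl := eq_of_forall_crosses_startTri_mem_pair hn hyT hyS hy_only
  have hfan := hy_only (0, k + 6) (by rw [mem_startTri]; omega) (by simp only [Crosses]; omega)
  have hshort := hy_only (k + 6, k + 8) (by rw [mem_startTri]; omega)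
    (by simp only [Crosses]; omega)
  refine ⟨s, hsS, x, hxS, r, hf1, hf2, ?_⟩
  obtain ⟨s₁, s₂⟩ := s
  obtain ⟨r₁, r₂⟩ := r
  simp only [Prod.mk.injEq] at hfan hshort ⊢
  omega

theorem geodesic_first_flip {f : ℕ → Finset (ℕ × ℕ)}
    (hf : IsFlipPath n (k + 7) f (startTri k n) (targetTri k n)) :
    f 1 = insert (0, k + 7) ((startTri k n).erase (k + 6, k + 8)) := by
  obtain ⟨s, hsS, x, hxS, r, hf1, hf2, hs⟩ := geodesic_flip_one hn hf
  have htri : IsTriangulation n (insert x ((startTri k n).erase s)) :=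
    hf1 ▸ (hf.flipAdj (i := 1) (by omega)).1
  have hx : IsDiagonal n x := htri.2.1 x (Finset.mem_insert_self _ _)
  have hx_only : ∀ e ∈ startTri k n, Crosses x e → e = s :=
    fun e he hc => eq_of_crosses_of_isTriangulation_insert_erase htri he hc
  rcases hs with rfl | ⟨rfl, rfl⟩
  · rw [hf1, eq_of_forall_crosses_startTri_eq_short hn hx hxS hx_only]
  · exfalso
    obtain rfl := eq_of_forall_crosses_startTri_eq_fan hn hx hxS hx_only
    have hdead : f 2 = deadEnd k n := by
      ext ⟨p, q⟩
      simp only [hf2, hf1, Finset.mem_insert, Finset.mem_erase, mem_startTri, mem_deadEnd,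
        Prod.mk.injEq, ne_eq]
      omega
    have := (hdead ▸ hf.drop (i := 2) (by omega)).card_sdiff_lt
      (Finset.card_pos.1 (by rw [card_deadEnd_sdiff_targetTri hn]; omega)) (crossesTwo_deadEnd hn)
    rw [card_deadEnd_sdiff_targetTri hn] at this
    omega

end

end ConflictIncreasingFlip

open ConflictIncreasingFlip

/-- For every `k ≥ 1` and `n ≥ k + 7` there are triangulations `S`, `T` of
size `n` such that every geodesic from `S` to `T` begins with a flip
increasing the number of conflicts with `T` by exactly `k`. -/
theorem stmt2 :
    ∀ k : ℕ, 1 ≤ k → ∀ n : ℕ, k + 7 ≤ n → ∃ S T : Finset (ℕ × ℕ),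
      IsTriangulation n S ∧ IsTriangulation n T ∧
      ∀ (m : ℕ) (f : ℕ → Finset (ℕ × ℕ)), IsGeodesic n m f S T →
        conflicts (f 1) T = conflicts S T + k := by
  intro k _ n hn
  refine ⟨startTri k n, targetTri k n, isTriangulation_startTri hn, isTriangulation_targetTri hn,
    fun m f ⟨hf, hm⟩ => ?_⟩
  rw [flipDist_startTri_targetTri hn] at hm
  subst hm
  have hconf := conflicts_insert_erase (U := startTri k n) (T := targetTri k n)
    (s := (k + 6, k + 8)) (x := (0, k + 7)) (by rw [mem_startTri]; omega)
    (by rw [mem_startTri]; omega)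
  rw [card_filter_targetTri_crosses_short, card_filter_targetTri_crosses_zero_k7] at hconf
  rw [geodesic_first_flip hn hf]
  omega
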